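/- Assume 4 divides n. The graph G admits a perfect code if and only if there exist nonempty strings μ_1, …, μ_n, ν_1, …, ν_n, ζ_1, …, ζ_n, η, δ_1, …, δ_n, θ, β_1, …, β_n, γ_1, …, γ_n over the alphabet {#, a, b, c, d, *}, and a nonempty string u_{i,j} for every i ∈ [n] and every j with t_j ∈ N_G(t_i), such that, writing α_i = u_{p_1(i),i} u_{p_2(i),i} u_{p_3(i),i} u_{p_4(i),i} and α'_i = u_{i,p_1(i)} u_{i,p_2(i)} u_{i,p_3(i)} u_{i,p_4(i)}, one has u = μ_1⋯μ_n ν_1⋯ν_n ζ_1⋯ζ_n η α_1 δ_1 ⋯ α_n δ_n θ β_1⋯β_n γ_1⋯γ_n and v = η θ δ_1⋯δ_n β_1 μ_1 α'_1 ν_1 γ_1 ζ_1 ⋯ β_n μ_n α'_n ν_n γ_n ζ_n, where u = #^{2n} b^n c (a^5 *)^n d (# a^8)^{2n − n/4} (a^4 #)^{n + n/4} and v = c d *^n (# a^8 # a^8 # a^4 # a^4 # b)^n. -/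

import Mathlib

/-- The six-letter alphabet `{#, a, b, c, d, *}`. -/
inductive A9 : Type
  | hash | a | b | c | d | star
deriving DecidableEq

/-- `w ^ k`: the `k`-fold concatenation of the string `w`. -/
def rep {γ : Type} (w : List γ) (k : ℕ) : List γ := (List.replicate k w).flatten

/-- Concatenation `f 0 ++ f 1 ++ ⋯ ++ f (k-1)` of a finite family of strings. -/
def finCat {γ : Type} {k : ℕ} (f : Fin k → List γ) : List γ := (List.ofFn f).flatten

/-- The string `u = #^{2n} b^n c (a^5 *)^n d (# a^8)^{2n - n/4} (a^4 #)^{n + n/4}`. -/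
def u9 (n : ℕ) : List A9 :=
  rep [A9.hash] (2 * n) ++ rep [A9.b] n ++ [A9.c] ++
    rep (rep [A9.a] 5 ++ [A9.star]) n ++ [A9.d] ++
    rep (A9.hash :: rep [A9.a] 8) (2 * n - n / 4) ++
    rep (rep [A9.a] 4 ++ [A9.hash]) (n + n / 4)

/-- The string `v = c d *^n (# a^8 # a^8 # a^4 # a^4 # b)^n`. -/
def v9 (n : ℕ) : List A9 :=
  [A9.c, A9.d] ++ rep [A9.star] n ++
    rep ([A9.hash] ++ rep [A9.a] 8 ++ [A9.hash] ++ rep [A9.a] 8 ++ [A9.hash] ++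
      rep [A9.a] 4 ++ [A9.hash] ++ rep [A9.a] 4 ++ [A9.hash, A9.b]) n

namespace S9
variable {γ : Type}

theorem rep_zero (w : List γ) : rep w 0 = [] := rfl

theorem rep_succ (w : List γ) (k : ℕ) : rep w (k+1) = w ++ rep w k := by
  simp [rep, List.replicate_succ]

theorem rep_one (w : List γ) : rep w 1 = w := by simp [rep]

theorem rep_add (w : List γ) (k l : ℕ) : rep w (k+l) = rep w k ++ rep w l := by
  induction k with
  | zero => simp [rep_zero]
  | succ k ih => rw [Nat.succ_add, rep_succ, rep_succ, ih, List.append_assoc]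

theorem rep_singleton (x : γ) (k : ℕ) : rep [x] k = List.replicate k x := by
  induction k with
  | zero => rfl
  | succ k ih => rw [rep_succ, ih, List.replicate_succ]; rfl

theorem length_rep (w : List γ) (k : ℕ) : (rep w k).length = k * w.length := by
  induction k with
  | zero => simp [rep_zero]
  | succ k ih => rw [rep_succ, List.length_append, ih, Nat.succ_mul]; ring

theorem mem_rep {x : γ} {w : List γ} {k : ℕ} (h : x ∈ rep w k) : x ∈ w := by
  induction k with
  | zero => cases h
  | succ k ih =>
    rw [rep_succ, List.mem_append] at h
    rcases h with h | h
    · exact h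
    · exact ih h

theorem not_mem_rep {x : γ} {w : List γ} (h : x ∉ w) (k : ℕ) : x ∉ rep w k :=
  fun hx => h (mem_rep hx)

theorem finCat_zero (f : Fin 0 → List γ) : finCat f = [] := rfl

theorem finCat_succ {n : ℕ} (f : Fin (n+1) → List γ) :
    finCat f = f 0 ++ finCat (fun i : Fin n => f i.succ) := by
  rw [finCat, List.ofFn_succ]; rfl

theorem length_finCat {n : ℕ} (f : Fin n → List γ) :
    (finCat f).length = ∑ i, (f i).length := by
  induction n with
  | zero => simp [finCat_zero]
  | succ n ih => rw [finCat_succ, List.length_append, ih, Fin.sum_univ_succ]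

theorem mem_finCat {n : ℕ} {f : Fin n → List γ} {x : γ} {i : Fin n} (h : x ∈ f i) :
    x ∈ finCat f := by
  rw [finCat, List.mem_flatten]
  exact ⟨f i, by rw [List.mem_ofFn]; exact ⟨i, rfl⟩, h⟩

theorem count_finCat [DecidableEq γ] {n : ℕ} (f : Fin n → List γ) (x : γ) :
    (finCat f).count x = ∑ i, (f i).count x := by
  induction n with
  | zero => simp [finCat_zero]
  | succ n ih => rw [finCat_succ, List.count_append, ih, Fin.sum_univ_succ]

theorem finCat_const {n : ℕ} (w : List γ) : finCat (fun _ : Fin n => w) = rep w n := by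
  induction n with
  | zero => rfl
  | succ n ih => rw [finCat_succ, rep_succ, ih]

theorem finCat_congr {n : ℕ} {f g : Fin n → List γ} (h : ∀ i, f i = g i) :
    finCat f = finCat g := by
  unfold finCat; congr 1; exact funext h ▸ rfl

theorem finCat_rep {n : ℕ} (w : List γ) (c : Fin n → ℕ) :
    finCat (fun i => rep w (c i)) = rep w (∑ i, c i) := by
  induction n with
  | zero => rfl
  | succ n ih => rw [finCat_succ, Fin.sum_univ_succ, rep_add, ih]

/-- Splitting at a unique occurrence, both sides known x-free. -/
theorem unique_split [DecidableEq γ] {x : γ} :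
    ∀ {A A' B B' : List γ}, A ++ x :: B = A' ++ x :: B' → x ∉ A → x ∉ A' →
      A = A' ∧ B = B' := by
  intro A
  induction A with
  | nil =>
    intro A' B B' h hA hA'
    cases A' with
    | nil => simpa using h
    | cons y A' =>
      simp only [List.nil_append, List.cons_append, List.cons.injEq] at h
      exact absurd (h.1 ▸ List.mem_cons_self (a := y) (l := A')) hA'
  | cons z A ih =>
    intro A' B B' h hA hA'
    cases A' with
    | nil =>
      simp only [List.cons_append, List.nil_append, List.cons.injEq] at h
      exact absurd (h.1 ▸ List.mem_cons_self (a := z) (l := A)) hA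
    | cons y A' =>
      simp only [List.cons_append, List.cons.injEq] at h
      obtain ⟨rfl, h2⟩ := h
      have := ih h2 (fun hx => hA (List.mem_cons_of_mem _ hx))
        (fun hx => hA' (List.mem_cons_of_mem _ hx))
      exact ⟨by rw [this.1], this.2⟩

/-- Splitting at a unique occurrence, RHS known x-free on both sides. -/
theorem unique_split' [DecidableEq γ] {x : γ} {A A' B B' : List γ}
    (h : A ++ x :: B = A' ++ x :: B') (hA' : x ∉ A') (hB' : x ∉ B') :
    A = A' ∧ B = B' := by
  have hc : (A ++ x :: B).count x = 1 := by
    rw [h]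
    simp [List.count_append, List.count_cons, List.count_eq_zero_of_not_mem hA',
      List.count_eq_zero_of_not_mem hB']
  have hA : x ∉ A := by
    intro hx
    have : 1 ≤ A.count x := List.one_le_count_iff.mpr hx
    simp [List.count_append, List.count_cons] at hc
    omega
  exact unique_split h hA hA'

/-- Pieces each of shape `q ++ [x]` with `x ∉ q`, tiling `rep (y ++ [x]) n`, must all equal `y`. -/
theorem pieces_eq [DecidableEq γ] {x : γ} {y : List γ} (hy : x ∉ y) :
    ∀ (Qs : List (List γ)) (n : ℕ),
      (Qs.map (· ++ [x])).flatten = rep (y ++ [x]) n → Qs.length = n →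
      (∀ q ∈ Qs, x ∉ q) → ∀ q ∈ Qs, q = y := by
  intro Qs
  induction Qs with
  | nil =>
    intro n _ _ _ q hq
    exact absurd hq List.not_mem_nil
  | cons q0 Qs ih =>
    intro n h hlen hmem q hq
    cases n with
    | zero => simp at hlen
    | succ m =>
      rw [rep_succ] at h
      simp only [List.map_cons, List.flatten_cons] at h
      rw [List.append_assoc, List.append_assoc, List.singleton_append, List.singleton_append] at h
      have hsp := unique_split h (hmem q0 List.mem_cons_self) hy
      rcases List.mem_cons.mp hq with rfl | hq
      · exact hsp.1
      · exact ih m hsp.2 (by simpa using hlen) (fun p hp => hmem p (List.mem_cons_of_mem _ hp)) q hq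

theorem nbhd_symm {n : ℕ} (G : SimpleGraph (Fin n)) [DecidableRel G.Adj] {i j : Fin n} :
    j ∈ insert i (G.neighborFinset i) ↔ i ∈ insert j (G.neighborFinset j) := by
  simp only [Finset.mem_insert, SimpleGraph.mem_neighborFinset]
  constructor
  · rintro (rfl | h); exact Or.inl rfl; exact Or.inr h.symm
  · rintro (rfl | h); exact Or.inl rfl; exact Or.inr h.symm

theorem card_nbhd {n : ℕ} (G : SimpleGraph (Fin n)) [DecidableRel G.Adj]
    (hreg : G.IsRegularOfDegree 3) (i : Fin n) :
    (insert i (G.neighborFinset i)).card = 4 := by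
  rw [Finset.card_insert_of_notMem (by simp), G.card_neighborFinset_eq_degree, hreg i]

theorem code_card {n : ℕ} (G : SimpleGraph (Fin n)) [DecidableRel G.Adj]
    (hreg : G.IsRegularOfDegree 3) (C : Finset (Fin n))
    (hC : ∀ x : Fin n, ((insert x (G.neighborFinset x)) ∩ C).card = 1) :
    4 * C.card = n := by
  have key : ∑ x : Fin n, ((insert x (G.neighborFinset x)) ∩ C).card = n := by
    simp [hC]
  have swap : ∑ x : Fin n, ((insert x (G.neighborFinset x)) ∩ C).card
      = ∑ c ∈ C, (insert c (G.neighborFinset c)).card := by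
    have h1 : ∀ x : Fin n, ((insert x (G.neighborFinset x)) ∩ C).card
        = ∑ c ∈ C, if x ∈ insert c (G.neighborFinset c) then 1 else 0 := by
      intro x
      rw [Finset.inter_comm, ← Finset.filter_mem_eq_inter, Finset.card_filter]
      exact Finset.sum_congr rfl fun c _ => by
        by_cases h : c ∈ insert x (G.neighborFinset x)
        · rw [if_pos h, if_pos ((nbhd_symm G).mp h)]
        · rw [if_neg h, if_neg (fun hh => h ((nbhd_symm G).mpr hh))]
    simp only [h1]
    rw [Finset.sum_comm]
    refine Finset.sum_congr rfl fun c _ => ?_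
    rw [Finset.sum_ite_mem, Finset.univ_inter]
    simp
  rw [swap] at key
  have h2 : ∑ c ∈ C, (insert c (G.neighborFinset c)).card = 4 * C.card := by
    rw [Finset.sum_congr rfl fun c _ => card_nbhd G hreg c, Finset.sum_const,
      smul_eq_mul, Nat.mul_comm]
  omega

theorem inter_card_eq_filter {n : ℕ} (G : SimpleGraph (Fin n)) [DecidableRel G.Adj]
    (nb : Fin 4 → Fin n → Fin n)
    (hnb : ∀ i : Fin n,
      insert i (G.neighborFinset i) = {nb 0 i, nb 1 i, nb 2 i, nb 3 i})
    (hnbInj : ∀ i : Fin n, Function.Injective fun r : Fin 4 => nb r i)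
    (C : Finset (Fin n)) (i : Fin n) :
    ((insert i (G.neighborFinset i)) ∩ C).card
      = (Finset.univ.filter (fun r : Fin 4 => nb r i ∈ C)).card := by
  have himg : (insert i (G.neighborFinset i))
      = Finset.univ.image (fun r : Fin 4 => nb r i) := by
    rw [hnb i]
    have : (Finset.univ : Finset (Fin 4)) = {0, 1, 2, 3} := by decide
    rw [this]
    simp [Finset.image_insert]
  rw [himg, ← Finset.filter_mem_eq_inter, Finset.filter_image,
    Finset.card_image_of_injective _ (hnbInj i)]

def Bb : List A9 := A9.hash :: rep [A9.a] 8
def Bg : List A9 := rep [A9.a] 4 ++ [A9.hash]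
def Pb : List A9 := [A9.hash] ++ rep [A9.a] 8 ++ [A9.hash] ++ rep [A9.a] 8 ++ [A9.hash] ++
      rep [A9.a] 4 ++ [A9.hash] ++ rep [A9.a] 4 ++ [A9.hash, A9.b]
theorem forward (n : ℕ) (hn : 4 ∣ n) (G : SimpleGraph (Fin n)) [DecidableRel G.Adj]
    (hreg : G.IsRegularOfDegree 3)
    (nb : Fin 4 → Fin n → Fin n)
    (hnb : ∀ i : Fin n,
      insert i (G.neighborFinset i) = {nb 0 i, nb 1 i, nb 2 i, nb 3 i})
    (hnbInj : ∀ i : Fin n, Function.Injective fun r : Fin 4 => nb r i)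
    (C : Finset (Fin n))
    (hC : ∀ x : Fin n, ((insert x (G.neighborFinset x)) ∩ C).card = 1) :
    ∃ (μ ν ζ δ β γ : Fin n → List A9) (η θ : List A9)
      (U : Fin n → Fin n → List A9),
      (∀ i, μ i ≠ [] ∧ ν i ≠ [] ∧ ζ i ≠ [] ∧ δ i ≠ [] ∧ β i ≠ [] ∧ γ i ≠ []) ∧
      η ≠ [] ∧ θ ≠ [] ∧
      (∀ i j : Fin n, j ∈ insert i (G.neighborFinset i) → U i j ≠ []) ∧
      u9 n =
        finCat μ ++ finCat ν ++ finCat ζ ++ η ++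
          finCat (fun i =>
            (U (nb 0 i) i ++ U (nb 1 i) i ++ U (nb 2 i) i ++ U (nb 3 i) i) ++ δ i) ++
          θ ++ finCat β ++ finCat γ ∧
      v9 n =
        η ++ θ ++ finCat δ ++
          finCat (fun i =>
            β i ++ μ i ++
              (U i (nb 0 i) ++ U i (nb 1 i) ++ U i (nb 2 i) ++ U i (nb 3 i)) ++
              ν i ++ γ i ++ ζ i) 
:= by
  classical
  refine ⟨fun _ => [A9.hash], fun _ => [A9.hash], fun _ => [A9.b], fun _ => [A9.star],
    fun i => rep Bb (if i ∈ C then 1 else 2), fun i => rep Bg (if i ∈ C then 2 else 1),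
    [A9.c], [A9.d], fun i _ => if i ∈ C then [A9.a, A9.a] else [A9.a], ?_, ?_, ?_, ?_, ?_, ?_⟩
  · intro i
    refine ⟨by simp, by simp, by simp, by simp, ?_, ?_⟩ <;> by_cases hi : i ∈ C <;>
      simp [hi, rep_succ, Bb, Bg, rep]
  · simp
  · simp
  · intro i j _
    by_cases hi : i ∈ C <;> simp [hi]
  · -- u9 equation
    have hcard := code_card G hreg C hC
    have hfilt : Finset.univ.filter (fun i : Fin n => i ∈ C) = C := by
      ext x; simp
    have hindsum : ∑ i : Fin n, (if i ∈ C then 1 else 0) = C.card := by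
      simp [Finset.sum_boole, hfilt]
    have hmid : finCat (fun i =>
        ((if nb 0 i ∈ C then [A9.a, A9.a] else [A9.a]) ++
         (if nb 1 i ∈ C then [A9.a, A9.a] else [A9.a]) ++
         (if nb 2 i ∈ C then [A9.a, A9.a] else [A9.a]) ++
         (if nb 3 i ∈ C then [A9.a, A9.a] else [A9.a])) ++ [A9.star])
        = rep (rep [A9.a] 5 ++ [A9.star]) n := by
      rw [← finCat_const]
      refine finCat_congr fun i => ?_
      have hone : (Finset.univ.filter (fun r : Fin 4 => nb r i ∈ C)).card = 1 := by
        rw [← inter_card_eq_filter G nb hnb hnbInj C i]; exact hC i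
      have h5 : ∑ r : Fin 4, (if nb r i ∈ C then 2 else 1) = 5 := by
        have heq : ∀ r : Fin 4, (if nb r i ∈ C then 2 else 1)
            = (if nb r i ∈ C then 1 else 0) + 1 := fun r => by by_cases h : nb r i ∈ C <;> simp [h]
        rw [Fintype.sum_congr _ _ heq, Finset.sum_add_distrib]
        simp [Finset.sum_boole, hone]
      have hrepl : ∀ (p : Prop) [Decidable p],
          (if p then [A9.a, A9.a] else [A9.a]) = List.replicate (if p then 2 else 1) A9.a := by
        intro p _; by_cases h : p <;> simp [h]
      rw [Fin.sum_univ_four] at h5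
      have h5' : ((if nb 0 i ∈ C then 2 else 1) + (if nb 1 i ∈ C then 2 else 1)
          + (if nb 2 i ∈ C then 2 else 1)) + (if nb 3 i ∈ C then 2 else 1) = 5 := by omega
      rw [hrepl, hrepl, hrepl, hrepl, ← List.replicate_add, ← List.replicate_add,
        ← List.replicate_add, h5', rep_singleton]
    have hβ : finCat (fun i => rep Bb (if i ∈ C then 1 else 2)) = rep Bb (2 * n - n / 4) := by
      rw [finCat_rep]
      congr 1
      have key : ∑ i : Fin n, ((if i ∈ C then 1 else 0) + (if i ∈ C then (1:ℕ) else 2))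
          = 2 * n := by
        have heq : ∀ i : Fin n, ((if i ∈ C then 1 else 0) + (if i ∈ C then (1:ℕ) else 2)) = 2 :=
          fun i => by by_cases h : i ∈ C <;> simp [h]
        rw [Fintype.sum_congr _ _ heq]
        simp [Finset.card_univ, Nat.mul_comm]
      rw [Finset.sum_add_distrib, hindsum] at key
      omega
    have hγ : finCat (fun i => rep Bg (if i ∈ C then 2 else 1)) = rep Bg (n + n / 4) := by
      rw [finCat_rep]
      congr 1
      have key : ∑ i : Fin n, (if i ∈ C then (2:ℕ) else 1)
          = ∑ i : Fin n, ((if i ∈ C then 1 else 0) + 1) := by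
        refine Fintype.sum_congr _ _ fun i => by by_cases h : i ∈ C <;> simp [h]
      rw [Finset.sum_add_distrib, hindsum] at key
      simp only [Finset.sum_const, Finset.card_univ, Fintype.card_fin, smul_eq_mul,
        mul_one] at key
      omega
    beta_reduce
    rw [u9, hmid, hβ, hγ, finCat_const, finCat_const, two_mul, rep_add]
    simp [List.append_assoc, Bb, Bg]
  · -- v9 equation
    have hblock : finCat (fun i =>
        rep Bb (if i ∈ C then 1 else 2) ++ [A9.hash] ++
          ((if i ∈ C then [A9.a, A9.a] else [A9.a]) ++
           (if i ∈ C then [A9.a, A9.a] else [A9.a]) ++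
           (if i ∈ C then [A9.a, A9.a] else [A9.a]) ++
           (if i ∈ C then [A9.a, A9.a] else [A9.a])) ++
          [A9.hash] ++ rep Bg (if i ∈ C then 2 else 1) ++ [A9.b])
        = rep Pb n := by
      rw [← finCat_const]
      refine finCat_congr fun i => ?_
      by_cases hi : i ∈ C
      · simp only [if_pos hi]; rfl
      · simp only [if_neg hi]; rfl
    beta_reduce
    rw [v9, finCat_const, hblock, Pb]
    simp [List.append_assoc]

def Yb : List A9 := [A9.hash] ++ rep [A9.a] 8 ++ [A9.hash] ++ rep [A9.a] 8 ++ [A9.hash] ++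
      rep [A9.a] 4 ++ [A9.hash] ++ rep [A9.a] 4 ++ [A9.hash]

theorem sum_all_one {n : ℕ} (f : Fin n → ℕ) (h1 : ∀ i, 1 ≤ f i) (h : ∑ i, f i = n) :
    ∀ i, f i = 1 := by
  have h0 : ∑ i, (f i - 1) = 0 := by
    have hs : ∑ i : Fin n, f i = (∑ i, (f i - 1)) + ∑ _i : Fin n, 1 := by
      rw [← Finset.sum_add_distrib]
      exact Fintype.sum_congr _ _ fun i => by have := h1 i; omega
    have hn' : ∑ _i : Fin n, (1:ℕ) = n := by simp
    rw [hs, hn'] at h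
    omega
  intro i
  have := (Finset.sum_eq_zero_iff.mp h0) i (Finset.mem_univ i)
  have := h1 i
  omega

theorem exists_of_mem_finCat {n : ℕ} {f : Fin n → List γ} {x : γ} (h : x ∈ finCat f) :
    ∃ i, x ∈ f i := by
  rw [finCat, List.mem_flatten] at h
  obtain ⟨l, hl, hx⟩ := h
  rw [List.mem_ofFn] at hl
  obtain ⟨i, rfl⟩ := hl
  exact ⟨i, hx⟩

theorem le_length_finCat {n : ℕ} {f : Fin n → List γ} (h : ∀ i, f i ≠ []) :
    n ≤ (finCat f).length := by
  rw [length_finCat]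
  calc n = ∑ _i : Fin n, 1 := by simp
  _ ≤ ∑ i, (f i).length := Finset.sum_le_sum fun i _ =>
      List.length_pos_iff.mpr (h i)

theorem singleton_pieces {n : ℕ} {f : Fin n → List γ} {x : γ}
    (h : finCat f = List.replicate n x) (hne : ∀ i, f i ≠ []) : ∀ i, f i = [x] := by
  have hlen : ∀ i, (f i).length = 1 := by
    refine sum_all_one _ (fun i => List.length_pos_iff.mpr (hne i)) ?_
    rw [← length_finCat, h, List.length_replicate]
  intro i
  obtain ⟨y, hy⟩ := List.length_eq_one_iff.mp (hlen i)
  have : y ∈ finCat f := mem_finCat (i := i) (by rw [hy]; exact List.mem_singleton_self y)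
  rw [h] at this
  rw [hy, List.eq_of_mem_replicate this]

theorem mem_X1 {n m : ℕ} {x : A9} (h : x ∈ rep [A9.hash] n ++ rep [A9.b] m) :
    x = A9.hash ∨ x = A9.b := by
  rcases List.mem_append.mp h with h | h
  · exact Or.inl (by simpa using mem_rep h)
  · exact Or.inr (by simpa using mem_rep h)

theorem mem_Z {x : A9} (h : x ∈ rep [A9.a] 5 ++ [A9.star]) : x = A9.a ∨ x = A9.star := by
  rcases List.mem_append.mp h with h | h
  · exact Or.inl (by simpa using mem_rep h)
  · exact Or.inr (by simpa using h)

theorem mem_Bb {x : A9} (h : x ∈ Bb) : x = A9.hash ∨ x = A9.a := by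
  rcases List.mem_cons.mp h with h | h
  · exact Or.inl h
  · exact Or.inr (by simpa using mem_rep h)

theorem mem_Bg {x : A9} (h : x ∈ Bg) : x = A9.hash ∨ x = A9.a := by
  rcases List.mem_append.mp h with h | h
  · exact Or.inr (by simpa using mem_rep h)
  · exact Or.inl (by simpa using h)

theorem mem_X3 {k l : ℕ} {x : A9} (h : x ∈ rep Bb k ++ rep Bg l) :
    x = A9.hash ∨ x = A9.a := by
  rcases List.mem_append.mp h with h | h
  · exact mem_Bb (mem_rep h)
  · exact mem_Bg (mem_rep h)

theorem not_mem_b_Yb : A9.b ∉ Yb := by decide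

theorem count_rep [DecidableEq γ] (x : γ) (w : List γ) (k : ℕ) :
    (rep w k).count x = k * w.count x := by
  induction k with
  | zero => simp [rep]
  | succ k ih => rw [rep_succ, List.count_append, ih, Nat.succ_mul]; ring

theorem block_core : ∀ (p : Fin 23) (k : Fin 5),
    (Yb.drop p.val).take (k.val + 6)
        = [A9.hash] ++ List.replicate (k.val + 4) A9.a ++ [A9.hash] →
      (k.val = 4 ∨ k.val = 0) := by decide

theorem block_cases (β γ' : List A9) (hβ : β ≠ []) (hγ : γ' ≠ []) (m : ℕ)
    (hm4 : 4 ≤ m) (hm8 : m ≤ 8)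
    (h : β ++ ([A9.hash] ++ (List.replicate m A9.a ++ ([A9.hash] ++ γ'))) = Yb) :
    m = 8 ∨ m = 4 := by
  have hYlen : Yb.length = 29 := by decide
  have hlen : β.length + m + γ'.length + 2 = 29 := by
    have hh := congrArg List.length h
    rw [hYlen] at hh
    simp [List.length_append] at hh
    omega
  set p := β.length with hp
  have hp1 : 1 ≤ p := List.length_pos_iff.mpr hβ
  have hγ1 : 1 ≤ γ'.length := List.length_pos_iff.mpr hγ
  have hdrop : Yb.drop p = [A9.hash] ++ (List.replicate m A9.a ++ ([A9.hash] ++ γ')) := by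
    rw [← h, List.drop_left]
  have htake : (Yb.drop p).take (m + 2) = [A9.hash] ++ List.replicate m A9.a ++ [A9.hash] := by
    rw [hdrop]
    have : [A9.hash] ++ (List.replicate m A9.a ++ ([A9.hash] ++ γ'))
        = ([A9.hash] ++ List.replicate m A9.a ++ [A9.hash]) ++ γ' := by
      simp [List.append_assoc]
    rw [this]
    have hl : ([A9.hash] ++ List.replicate m A9.a ++ [A9.hash]).length = m + 2 := by
      simp [List.length_append]
      try omega
    rw [← hl, List.take_left]
  obtain ⟨k, rfl⟩ : ∃ k, m = k + 4 := ⟨m - 4, by omega⟩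
  have hcore := block_core ⟨p, by omega⟩ ⟨k, by omega⟩ (by
    show (Yb.drop p).take (k + 6) = _
    have he : k + 4 + 2 = k + 6 := by omega
    rw [← he]
    exact htake)
  simp only at hcore
  omega

def Zb : List A9 := rep [A9.a] 5 ++ [A9.star]
theorem mem_rep_single {γ : Type} {x y : γ} {k : ℕ} (h : x ∈ rep [y] k) : x = y := by
  simpa using mem_rep h

theorem mem_Zb {x : A9} (h : x ∈ Zb) : x = A9.a ∨ x = A9.star := by
  rw [Zb] at h
  exact mem_Z h

theorem v9_eq (n : ℕ) : v9 n = A9.c :: (A9.d :: (rep [A9.star] n ++ rep Pb n)) := by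
  simp [v9, Pb, List.append_assoc]

theorem u9_eq (n : ℕ) : u9 n =
    (rep [A9.hash] n ++ (rep [A9.hash] n ++ rep [A9.b] n)) ++
      (A9.c :: (rep Zb n ++ (A9.d ::
        (rep (A9.hash :: rep [A9.a] 8) (2*n - n/4) ++ rep (rep [A9.a] 4 ++ [A9.hash]) (n + n/4))))) := by
  rw [u9, two_mul, rep_add]
  simp [Zb, List.append_assoc]

theorem Zb_cons : Zb = A9.a :: (rep [A9.a] 4 ++ [A9.star]) := by
  rw [Zb, show (5:ℕ) = 4 + 1 from rfl, rep_succ]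
  rfl

theorem Pb_cons : Pb = A9.hash :: (rep [A9.a] 8 ++ [A9.hash] ++ rep [A9.a] 8 ++ [A9.hash] ++
      rep [A9.a] 4 ++ [A9.hash] ++ rep [A9.a] 4 ++ [A9.hash, A9.b]) := by
  rw [Pb]; simp [List.append_assoc]

theorem Pb_eq : Pb = Yb ++ [A9.b] := by
  rw [Pb, Yb]; simp [List.append_assoc]

theorem count_star_Zb : Zb.count A9.star = 1 := by
  rw [Zb, rep_singleton]; simp [List.count_append]

theorem rfour : ∀ r : Fin 4, r = 0 ∨ r = 1 ∨ r = 2 ∨ r = 3 := by decide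

theorem backward (n : ℕ) (hpos : 0 < n) (G : SimpleGraph (Fin n)) [DecidableRel G.Adj]
    (nb : Fin 4 → Fin n → Fin n)
    (hnb : ∀ i : Fin n, insert i (G.neighborFinset i) = {nb 0 i, nb 1 i, nb 2 i, nb 3 i})
    (hnbInj : ∀ i : Fin n, Function.Injective fun r : Fin 4 => nb r i)
    (μ ν ζ δ β γ : Fin n → List A9) (η θ : List A9) (U : Fin n → Fin n → List A9)
    (hne : ∀ i, μ i ≠ [] ∧ ν i ≠ [] ∧ ζ i ≠ [] ∧ δ i ≠ [] ∧ β i ≠ [] ∧ γ i ≠ [])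
    (hηne : η ≠ []) (hθne : θ ≠ [])
    (hUne : ∀ i j : Fin n, j ∈ insert i (G.neighborFinset i) → U i j ≠ [])
    (hu : u9 n = finCat μ ++ finCat ν ++ finCat ζ ++ η ++
          finCat (fun i =>
            (U (nb 0 i) i ++ U (nb 1 i) i ++ U (nb 2 i) i ++ U (nb 3 i) i) ++ δ i) ++
          θ ++ finCat β ++ finCat γ)
    (hv : v9 n = η ++ θ ++ finCat δ ++
          finCat (fun i => β i ++ μ i ++
              (U i (nb 0 i) ++ U i (nb 1 i) ++ U i (nb 2 i) ++ U i (nb 3 i)) ++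
              ν i ++ γ i ++ ζ i)) :
    ∃ C : Finset (Fin n), ∀ x : Fin n, ((insert x (G.neighborFinset x)) ∩ C).card = 1 := by
  classical
  obtain ⟨m, hm⟩ : ∃ m, n = m + 1 := ⟨n - 1, by omega⟩
  have hmemnb : ∀ (i : Fin n) (r : Fin 4), nb r i ∈ insert i (G.neighborFinset i) := by
    intro i r
    rw [hnb i]
    rcases rfour r with rfl | rfl | rfl | rfl <;> simp
  have hexr : ∀ i j : Fin n, j ∈ insert i (G.neighborFinset i) → ∃ r : Fin 4, nb r i = j := by
    intro i j hj
    rw [hnb i] at hj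
    simp only [Finset.mem_insert, Finset.mem_singleton] at hj
    rcases hj with h | h | h | h
    exacts [⟨0, h.symm⟩, ⟨1, h.symm⟩, ⟨2, h.symm⟩, ⟨3, h.symm⟩]
  set Fμ := finCat μ with hFμdef
  set Fν := finCat ν with hFνdef
  set Fζ := finCat ζ with hFζdef
  set Fδ := finCat δ with hFδdef
  set Fβ := finCat β with hFβdef
  set Fγ := finCat γ with hFγdef
  set M := finCat (fun i =>
      (U (nb 0 i) i ++ U (nb 1 i) i ++ U (nb 2 i) i ++ U (nb 3 i) i) ++ δ i) with hMdef
  set BL := finCat (fun i => β i ++ μ i ++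
      (U i (nb 0 i) ++ U i (nb 1 i) ++ U i (nb 2 i) ++ U i (nb 3 i)) ++
      ν i ++ γ i ++ ζ i) with hBLdef
  rw [u9_eq] at hu
  rw [v9_eq] at hv
  -- η starts with c
  rcases η with _ | ⟨e, η'⟩
  · exact absurd rfl hηne
  have hv1 : A9.c :: (A9.d :: (rep [A9.star] n ++ rep Pb n))
      = e :: (η' ++ (θ ++ (Fδ ++ BL))) := by
    simpa only [List.cons_append, List.append_assoc] using hv
  injection hv1 with he hv2
  subst he
  -- split u at c
  have hu1 : (Fμ ++ (Fν ++ Fζ)) ++ (A9.c :: (η' ++ (M ++ (θ ++ (Fβ ++ Fγ)))))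
      = (rep [A9.hash] n ++ (rep [A9.hash] n ++ rep [A9.b] n)) ++
        (A9.c :: (rep Zb n ++ (A9.d ::
          (rep Bb (2*n - n/4) ++ rep Bg (n + n/4))))) := by
    simpa only [Bb, Bg, List.cons_append, List.append_assoc] using hu.symm
  obtain ⟨hL, hR⟩ := unique_split' hu1
    (by
      intro hc
      rcases List.mem_append.mp hc with h | h
      · exact absurd (mem_rep_single h) (by decide)
      rcases List.mem_append.mp h with h | h
      · exact absurd (mem_rep_single h) (by decide)
      · exact absurd (mem_rep_single h) (by decide))
    (by
      intro hc
      rcases List.mem_append.mp hc with h | h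
      · rcases mem_Zb (mem_rep h) with h' | h' <;> exact absurd h' (by decide)
      rcases List.mem_cons.mp h with h | h
      · exact absurd h (by decide)
      · rcases mem_X3 h with h' | h' <;> exact absurd h' (by decide))
  -- lengths of μ ν ζ pieces
  have hμlen : n ≤ Fμ.length := by rw [hFμdef]; exact le_length_finCat fun i => (hne i).1
  have hνlen : n ≤ Fν.length := by rw [hFνdef]; exact le_length_finCat fun i => (hne i).2.1
  have hζlen : n ≤ Fζ.length := by rw [hFζdef]; exact le_length_finCat fun i => (hne i).2.2.1
  have hLlen := congrArg List.length hL
  simp only [List.length_append, length_rep, List.length_cons, List.length_nil,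
    mul_one] at hLlen
  obtain ⟨hFμeq, hrest⟩ := List.append_inj hL
    (by simp only [length_rep, List.length_cons, List.length_nil, mul_one]; omega)
  obtain ⟨hFνeq, hFζeq⟩ := List.append_inj hrest
    (by simp only [length_rep, List.length_cons, List.length_nil, mul_one]; omega)
  have hμ1 : ∀ i, μ i = [A9.hash] :=
    singleton_pieces (by rw [← hFμdef, hFμeq, rep_singleton]) fun i => (hne i).1
  have hν1 : ∀ i, ν i = [A9.hash] :=
    singleton_pieces (by rw [← hFνdef, hFνeq, rep_singleton]) fun i => (hne i).2.1
  have hζ1 : ∀ i, ζ i = [A9.b] :=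
    singleton_pieces (by rw [← hFζdef, hFζeq, rep_singleton]) fun i => (hne i).2.2.1
  -- η' = []
  rcases η' with _ | ⟨e2, t2⟩
  case cons =>
    exfalso
    have hR' : e2 :: (t2 ++ (M ++ (θ ++ (Fβ ++ Fγ))))
        = A9.a :: ((rep [A9.a] 4 ++ [A9.star]) ++ (rep Zb m ++ (A9.d ::
          (rep Bb (2*n - n/4) ++ rep Bg (n + n/4))))) := by
      rw [show rep Zb n = Zb ++ rep Zb m from by rw [hm, rep_succ], Zb_cons] at hR
      simpa only [List.cons_append, List.append_assoc, List.nil_append, Zb_cons] using hR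
    have he2 : e2 = A9.a := by injection hR'
    have he2' : A9.d = e2 := by injection hv2
    rw [he2] at he2'
    exact absurd he2' (by decide)
  -- θ starts with d
  simp only [List.nil_append] at hR hv2
  rcases θ with _ | ⟨f, θ'⟩
  · exact absurd rfl hθne
  have hv2' : A9.d :: (rep [A9.star] n ++ rep Pb n) = f :: (θ' ++ (Fδ ++ BL)) := by
    simpa only [List.cons_append, List.append_assoc] using hv2
  injection hv2' with hf hv3
  subst hf
  -- split u at d
  have hu2 : M ++ (A9.d :: (θ' ++ (Fβ ++ Fγ)))
      = rep Zb n ++ (A9.d :: (rep Bb (2*n - n/4) ++ rep Bg (n + n/4))) := by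
    simpa only [List.cons_append, List.append_assoc] using hR
  obtain ⟨hM, hX3⟩ := unique_split' hu2
    (by
      intro hd
      rcases mem_Zb (mem_rep hd) with h' | h' <;> exact absurd h' (by decide))
    (by
      intro hd
      rcases mem_X3 hd with h' | h' <;> exact absurd h' (by decide))
  -- θ' = []
  rcases θ' with _ | ⟨e3, t3⟩
  case cons =>
    exfalso
    have he3 : e3 ∈ rep Bb (2*n - n/4) ++ rep Bg (n + n/4) := by
      rw [← hX3]; simp
    have hv3' : A9.star :: (rep [A9.star] m ++ rep Pb n)
        = e3 :: (t3 ++ (Fδ ++ BL)) := by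
      rw [show rep [A9.star] n = [A9.star] ++ rep [A9.star] m from by rw [hm, rep_succ]] at hv3
      simpa only [List.cons_append, List.append_assoc, List.nil_append] using hv3
    have : A9.star = e3 := by injection hv3'
    rcases mem_X3 he3 with h' | h' <;> rw [← this] at h' <;> exact absurd h' (by decide)
  simp only [List.nil_append] at hX3 hv3
  -- δ analysis
  have hδchars : ∀ x ∈ Fδ, x = A9.a ∨ x = A9.star := by
    intro x hx
    obtain ⟨i, hxi⟩ := exists_of_mem_finCat (by rw [← hFδdef]; exact hx)
    have hxM : x ∈ M := by
      rw [hMdef]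
      exact mem_finCat (i := i) (List.mem_append_right _ hxi)
    rw [hM] at hxM
    exact mem_Zb (mem_rep hxM)
  have hδlen : n ≤ Fδ.length := by rw [hFδdef]; exact le_length_finCat fun i => (hne i).2.2.2.1
  have hsplitδ : Fδ = rep [A9.star] n ∧ BL = rep Pb n := by
    rcases List.append_eq_append_iff.mp hv3.symm with ⟨w, hw1, hw2⟩ | ⟨w, hw1, hw2⟩
    · -- hw1 : rep [star] n = Fδ ++ w, hw2 : BL = w ++ rep Pb n
      have hwlen := congrArg List.length hw1
      simp only [List.length_append, length_rep, mul_one, List.length_cons,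
        List.length_nil] at hwlen
      have hwnil : w = [] := List.length_eq_zero_iff.mp (by omega)
      subst hwnil
      exact ⟨by rw [← List.append_nil Fδ, ← hw1], by rw [hw2, List.nil_append]⟩
    · -- hw1 : Fδ = rep [star] n ++ w, hw2 : rep Pb n = w ++ BL
      rcases w with _ | ⟨ew, tw⟩
      · exact ⟨by rw [hw1, List.append_nil], by rw [List.nil_append] at hw2; exact hw2.symm⟩
      · exfalso
        have hew : ew ∈ Fδ := by
          rw [hw1]; simp
        have : A9.hash = ew := by
          rw [show rep Pb n = Pb ++ rep Pb m from by rw [hm, rep_succ], Pb_cons] at hw2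
          have hw2' : A9.hash :: ((rep [A9.a] 8 ++ [A9.hash] ++ rep [A9.a] 8 ++ [A9.hash] ++
              rep [A9.a] 4 ++ [A9.hash] ++ rep [A9.a] 4 ++ [A9.hash, A9.b]) ++ rep Pb m)
              = ew :: (tw ++ BL) := by
            simpa only [List.cons_append, List.append_assoc, List.nil_append, Pb] using hw2
          injection hw2'
        rcases hδchars ew hew with h' | h' <;> rw [← this] at h' <;> exact absurd h' (by decide)
  obtain ⟨hFδeq, hBLeq⟩ := hsplitδ
  have hδ1 : ∀ i, δ i = [A9.star] :=
    singleton_pieces (by rw [← hFδdef, hFδeq, rep_singleton]) fun i => (hne i).2.2.2.1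
  -- α analysis
  have hcountM : M.count A9.star = n := by
    rw [hM, count_rep, count_star_Zb, mul_one]
  have hcountα : ∀ i,
      (U (nb 0 i) i ++ U (nb 1 i) i ++ U (nb 2 i) i ++ U (nb 3 i) i).count A9.star = 0 := by
    intro i
    have hsum : ∑ j : Fin n,
        (((U (nb 0 j) j ++ U (nb 1 j) j ++ U (nb 2 j) j ++ U (nb 3 j) j) ++ δ j).count A9.star)
        = n := by rw [← count_finCat, ← hMdef, hcountM]
    have heach : ∀ j : Fin n,
        (((U (nb 0 j) j ++ U (nb 1 j) j ++ U (nb 2 j) j ++ U (nb 3 j) j) ++ δ j).count A9.star)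
        = (U (nb 0 j) j ++ U (nb 1 j) j ++ U (nb 2 j) j ++ U (nb 3 j) j).count A9.star + 1 := by
      intro j
      rw [List.count_append, hδ1 j]
      simp
    have h1le : ∀ j : Fin n, 1 ≤
        (((U (nb 0 j) j ++ U (nb 1 j) j ++ U (nb 2 j) j ++ U (nb 3 j) j) ++ δ j).count A9.star) := by
      intro j; rw [heach j]; omega
    have := sum_all_one _ h1le hsum i
    rw [heach i] at this
    omega
  have hαeq : ∀ i, U (nb 0 i) i ++ U (nb 1 i) i ++ U (nb 2 i) i ++ U (nb 3 i) i
      = List.replicate 5 A9.a := by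
    have hM2 : ((List.ofFn (fun i : Fin n =>
        U (nb 0 i) i ++ U (nb 1 i) i ++ U (nb 2 i) i ++ U (nb 3 i) i)).map
          (· ++ [A9.star])).flatten = rep (rep [A9.a] 5 ++ [A9.star]) n := by
      rw [List.map_ofFn]
      show finCat (fun i : Fin n =>
        (U (nb 0 i) i ++ U (nb 1 i) i ++ U (nb 2 i) i ++ U (nb 3 i) i) ++ [A9.star]) = _
      have h1 : finCat (fun i : Fin n =>
          (U (nb 0 i) i ++ U (nb 1 i) i ++ U (nb 2 i) i ++ U (nb 3 i) i) ++ [A9.star]) = M := by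
        rw [hMdef]
        exact finCat_congr fun i => by rw [hδ1 i]
      rw [h1, hM]
      simp only [Zb]
    intro i
    have := pieces_eq (x := A9.star) (y := rep [A9.a] 5)
      (by rw [rep_singleton]; simp [List.mem_replicate])
      (List.ofFn (fun i : Fin n =>
        U (nb 0 i) i ++ U (nb 1 i) i ++ U (nb 2 i) i ++ U (nb 3 i) i)) n hM2
      (by simp)
      (by
        intro q hq
        obtain ⟨j, hj⟩ := List.mem_ofFn.mp hq
        rw [← hj]
        exact List.count_eq_zero.mp (hcountα j))
      (U (nb 0 i) i ++ U (nb 1 i) i ++ U (nb 2 i) i ++ U (nb 3 i) i)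
      (List.mem_ofFn.mpr ⟨i, rfl⟩)
    rw [this, rep_singleton]
  -- per-part facts for U (nb r i) i
  have hUpos : ∀ (i : Fin n) (r : Fin 4), 1 ≤ (U (nb r i) i).length := fun i r =>
    List.length_pos_iff.mpr (hUne (nb r i) i ((nbhd_symm G).mp (hmemnb i r)))
  have hUlen5 : ∀ i : Fin n, (U (nb 0 i) i).length + (U (nb 1 i) i).length
      + (U (nb 2 i) i).length + (U (nb 3 i) i).length = 5 := by
    intro i
    have := congrArg List.length (hαeq i)
    simp only [List.length_append, List.length_replicate] at this
    omega
  have hUle2 : ∀ (i : Fin n) (r : Fin 4), (U (nb r i) i).length ≤ 2 := by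
    intro i r
    have h5 := hUlen5 i
    have p0 := hUpos i 0
    have p1 := hUpos i 1
    have p2 := hUpos i 2
    have p3 := hUpos i 3
    rcases rfour r with rfl | rfl | rfl | rfl <;> omega
  have hUrep : ∀ (i : Fin n) (r : Fin 4),
      U (nb r i) i = List.replicate (U (nb r i) i).length A9.a := by
    intro i r
    refine List.eq_replicate_length.mpr fun x hx => ?_
    have hxmem : x ∈ U (nb 0 i) i ++ U (nb 1 i) i ++ U (nb 2 i) i ++ U (nb 3 i) i := by
      rcases rfour r with rfl | rfl | rfl | rfl
      · exact List.mem_append_left _ (List.mem_append_left _ (List.mem_append_left _ hx))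
      · exact List.mem_append_left _ (List.mem_append_left _ (List.mem_append_right _ hx))
      · exact List.mem_append_left _ (List.mem_append_right _ hx)
      · exact List.mem_append_right _ hx
    rw [hαeq i] at hxmem
    exact List.eq_of_mem_replicate hxmem
  have hUgen : ∀ i j : Fin n, j ∈ insert i (G.neighborFinset i) →
      U j i = List.replicate (U j i).length A9.a ∧ 1 ≤ (U j i).length ∧ (U j i).length ≤ 2 := by
    intro i j hj
    obtain ⟨r, rfl⟩ := hexr i j hj
    exact ⟨hUrep i r, hUpos i r, hUle2 i r⟩
  -- blocks
  have hβchars : ∀ (i : Fin n) (x : A9), x ∈ β i → x = A9.hash ∨ x = A9.a := by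
    intro i x hx
    have : x ∈ rep Bb (2*n - n/4) ++ rep Bg (n + n/4) := by
      rw [← hX3]
      exact List.mem_append_left _ (by rw [hFβdef]; exact mem_finCat (i := i) hx)
    exact mem_X3 this
  have hγchars : ∀ (i : Fin n) (x : A9), x ∈ γ i → x = A9.hash ∨ x = A9.a := by
    intro i x hx
    have : x ∈ rep Bb (2*n - n/4) ++ rep Bg (n + n/4) := by
      rw [← hX3]
      exact List.mem_append_right _ (by rw [hFγdef]; exact mem_finCat (i := i) hx)
    exact mem_X3 this
  have hUgen' : ∀ (i : Fin n) (r : Fin 4),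
      U i (nb r i) = List.replicate (U i (nb r i)).length A9.a ∧
        1 ≤ (U i (nb r i)).length ∧ (U i (nb r i)).length ≤ 2 := by
    intro i r
    exact hUgen (nb r i) i ((nbhd_symm G).mp (hmemnb i r))
  have hqeq : ∀ i : Fin n,
      β i ++ ([A9.hash] ++ ((U i (nb 0 i) ++ U i (nb 1 i) ++ U i (nb 2 i) ++ U i (nb 3 i))
        ++ ([A9.hash] ++ γ i))) = Yb := by
    have hflat : ((List.ofFn (fun i : Fin n =>
        β i ++ ([A9.hash] ++ ((U i (nb 0 i) ++ U i (nb 1 i) ++ U i (nb 2 i) ++ U i (nb 3 i))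
          ++ ([A9.hash] ++ γ i))))).map (· ++ [A9.b])).flatten = rep (Yb ++ [A9.b]) n := by
      rw [List.map_ofFn]
      show finCat (fun i : Fin n =>
        (β i ++ ([A9.hash] ++ ((U i (nb 0 i) ++ U i (nb 1 i) ++ U i (nb 2 i) ++ U i (nb 3 i))
          ++ ([A9.hash] ++ γ i)))) ++ [A9.b]) = _
      have h1 : finCat (fun i : Fin n =>
          (β i ++ ([A9.hash] ++ ((U i (nb 0 i) ++ U i (nb 1 i) ++ U i (nb 2 i) ++ U i (nb 3 i))
            ++ ([A9.hash] ++ γ i)))) ++ [A9.b]) = BL := by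
        rw [hBLdef]
        refine finCat_congr fun i => ?_
        rw [hμ1 i, hν1 i, hζ1 i]
        simp [List.append_assoc]
      rw [h1, hBLeq, ← Pb_eq]
    intro i
    exact pieces_eq (x := A9.b) (y := Yb) not_mem_b_Yb
      (List.ofFn (fun i : Fin n =>
        β i ++ ([A9.hash] ++ ((U i (nb 0 i) ++ U i (nb 1 i) ++ U i (nb 2 i) ++ U i (nb 3 i))
          ++ ([A9.hash] ++ γ i))))) n hflat (by simp)
      (by
        intro q hq
        obtain ⟨j, hj⟩ := List.mem_ofFn.mp hq
        rw [← hj]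
        intro hb
        rcases List.mem_append.mp hb with h | h
        · rcases hβchars j _ h with h' | h' <;> exact absurd h' (by decide)
        rcases List.mem_append.mp h with h | h
        · exact absurd (List.mem_singleton.mp h) (by decide)
        rcases List.mem_append.mp h with h | h
        · have h4 : (A9.b : A9) = A9.a := by
            have hxa : ∀ x ∈ U j (nb 0 j) ++ U j (nb 1 j) ++ U j (nb 2 j) ++ U j (nb 3 j),
                x = A9.a := by
              intro x hx
              rcases List.mem_append.mp hx with hx | hx
              rotate_left
              · exact List.eq_of_mem_replicate ((hUgen' j 3).1 ▸ hx)
              rcases List.mem_append.mp hx with hx | hx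
              rotate_left
              · exact List.eq_of_mem_replicate ((hUgen' j 2).1 ▸ hx)
              rcases List.mem_append.mp hx with hx | hx
              · exact List.eq_of_mem_replicate ((hUgen' j 0).1 ▸ hx)
              · exact List.eq_of_mem_replicate ((hUgen' j 1).1 ▸ hx)
            exact hxa _ h
          exact absurd h4 (by decide)
        rcases List.mem_append.mp h with h | h
        · exact absurd (List.mem_singleton.mp h) (by decide)
        · rcases hγchars j _ h with h' | h' <;> exact absurd h' (by decide))
      _ (List.mem_ofFn.mpr ⟨i, rfl⟩)
  -- define the code
  set C : Finset (Fin n) := Finset.univ.filter (fun i : Fin n => (U i (nb 0 i)).length = 2)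
    with hCdef
  have hApRep : ∀ i : Fin n, U i (nb 0 i) ++ U i (nb 1 i) ++ U i (nb 2 i) ++ U i (nb 3 i)
      = List.replicate ((U i (nb 0 i)).length + (U i (nb 1 i)).length
          + (U i (nb 2 i)).length + (U i (nb 3 i)).length) A9.a := by
    intro i
    rw [(hUgen' i 0).1, (hUgen' i 1).1, (hUgen' i 2).1, (hUgen' i 3).1,
      ← List.replicate_add, ← List.replicate_add, ← List.replicate_add]
    simp [List.length_replicate]
  have hm84 : ∀ i : Fin n,
      (U i (nb 0 i)).length + (U i (nb 1 i)).length + (U i (nb 2 i)).length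
        + (U i (nb 3 i)).length = 8 ∨
      (U i (nb 0 i)).length + (U i (nb 1 i)).length + (U i (nb 2 i)).length
        + (U i (nb 3 i)).length = 4 := by
    intro i
    have h := hqeq i
    rw [hApRep i] at h
    have b0 := hUgen' i 0
    have b1 := hUgen' i 1
    have b2 := hUgen' i 2
    have b3 := hUgen' i 3
    exact block_cases _ _ (hne i).2.2.2.2.1 (hne i).2.2.2.2.2 _
      (by omega) (by omega) h
  have hlenC : ∀ (i : Fin n) (r : Fin 4), (U i (nb r i)).length = if i ∈ C then 2 else 1 := by
    intro i r
    have b0 := hUgen' i 0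
    have b1 := hUgen' i 1
    have b2 := hUgen' i 2
    have b3 := hUgen' i 3
    rcases hm84 i with h | h
    · have e0 : (U i (nb 0 i)).length = 2 := by omega
      have hiC : i ∈ C := by rw [hCdef]; simp [e0]
      rw [if_pos hiC]
      rcases rfour r with rfl | rfl | rfl | rfl <;> omega
    · have e0 : (U i (nb 0 i)).length = 1 := by omega
      have hiC : i ∉ C := by rw [hCdef]; simp [e0]
      rw [if_neg hiC]
      rcases rfour r with rfl | rfl | rfl | rfl <;> omega
  have hUlenC : ∀ i j : Fin n, j ∈ insert i (G.neighborFinset i) →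
      (U j i).length = if j ∈ C then 2 else 1 := by
    intro i j hj
    obtain ⟨s, hs⟩ := hexr j i ((nbhd_symm G).mp hj)
    rw [← hs]
    exact hlenC j s
  refine ⟨C, fun x => ?_⟩
  rw [inter_card_eq_filter G nb hnb hnbInj C x]
  have h5x := hUlen5 x
  have hr0 := hUlenC x (nb 0 x) (hmemnb x 0)
  have hr1 := hUlenC x (nb 1 x) (hmemnb x 1)
  have hr2 := hUlenC x (nb 2 x) (hmemnb x 2)
  have hr3 := hUlenC x (nb 3 x) (hmemnb x 3)
  rw [hr0, hr1, hr2, hr3] at h5x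
  rw [Finset.card_filter, Fin.sum_univ_four]
  by_cases h0 : nb 0 x ∈ C <;> by_cases h1 : nb 1 x ∈ C <;>
    by_cases h2 : nb 2 x ∈ C <;> by_cases h3 : nb 3 x ∈ C <;>
    simp only [h0, h1, h2, h3, if_true, if_false] at h5x ⊢ <;> omega

end S9

/-- **Statement 9** (non-erasing case). Let `G` be a 3-regular graph on `n` vertices
(`4 ∣ n`), with a fixed enumeration `nb 0 i, …, nb 3 i` of each closed neighborhood.
Then `G` admits a perfect code iff `u` and `v` admit a factorization into nonempty
factors as prescribed by the permutation of the reduction. -/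
theorem stmt_9 (n : ℕ) (hn : 4 ∣ n) (G : SimpleGraph (Fin n)) [DecidableRel G.Adj]
    (hreg : G.IsRegularOfDegree 3)
    (nb : Fin 4 → Fin n → Fin n)
    (hnb : ∀ i : Fin n,
      insert i (G.neighborFinset i) = {nb 0 i, nb 1 i, nb 2 i, nb 3 i})
    (hnbInj : ∀ i : Fin n, Function.Injective fun r : Fin 4 => nb r i) :
    (∃ C : Finset (Fin n), ∀ x : Fin n, ((insert x (G.neighborFinset x)) ∩ C).card = 1)
    ↔
    ∃ (μ ν ζ δ β γ : Fin n → List A9) (η θ : List A9)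
      (U : Fin n → Fin n → List A9),
      (∀ i, μ i ≠ [] ∧ ν i ≠ [] ∧ ζ i ≠ [] ∧ δ i ≠ [] ∧ β i ≠ [] ∧ γ i ≠ []) ∧
      η ≠ [] ∧ θ ≠ [] ∧
      (∀ i j : Fin n, j ∈ insert i (G.neighborFinset i) → U i j ≠ []) ∧
      u9 n =
        finCat μ ++ finCat ν ++ finCat ζ ++ η ++
          finCat (fun i =>
            (U (nb 0 i) i ++ U (nb 1 i) i ++ U (nb 2 i) i ++ U (nb 3 i) i) ++ δ i) ++
          θ ++ finCat β ++ finCat γ ∧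
      v9 n =
        η ++ θ ++ finCat δ ++
          finCat (fun i =>
            β i ++ μ i ++
              (U i (nb 0 i) ++ U i (nb 1 i) ++ U i (nb 2 i) ++ U i (nb 3 i)) ++
              ν i ++ γ i ++ ζ i) := by
  constructor
  · rintro ⟨C, hC⟩
    exact S9.forward n hn G hreg nb hnb hnbInj C hC
  · rintro ⟨μ, ν, ζ, δ, β, γ, η, θ, U, hne, hηne, hθne, hUne, hu, hv⟩
    by_cases hpos : 0 < n
    · exact S9.backward n hpos G nb hnb hnbInj μ ν ζ δ β γ η θ U hne hηne hθne hUne hu hv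
    · have hn0 : n = 0 := by omega
      subst hn0
      exact ⟨∅, fun x => x.elim0⟩
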